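/- Fix an integer K ≥ 1 and let ŝ, s : Fin K → ℝ satisfy ŝ k ≥ s k for all k ∈ Fin K. Then (1) for every H ∈ ℕ, V H ŝ ≥ V H s; and (2) if moreover ŝ ≠ s, then for every integer H ≥ 1, V H ŝ > V H s. -/

import Mathlib

open scoped BigOperators

noncomputable section

def simplex (K : ℕ) : Set (Fin K → ℝ) :=
  {q | (∀ k, 0 ≤ q k) ∧ ∑ k, q k = 1}

def simplexInt (K : ℕ) : Set (Fin K → ℝ) :=
  {r | (∀ k, 0 < r k) ∧ ∑ k, r k = 1}

noncomputable def V (K : ℕ) : ℕ → (Fin K → ℝ) → ℝ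
  | 0, s => ⨆ k, s k
  | H + 1, s =>
      sInf ((fun r : Fin K → ℝ =>
        sSup ((fun q : Fin K → ℝ => V K H (fun k => s k + q k / r k)) '' simplex K))
        '' simplexInt K)

/-! Weak monotonicity, invariance under adding a constant to every coordinate, and the bound
`s j ≤ V K H s` all pass from `V K H` to `V K (H + 1)`. For strictness, let `s ≤ ŝ` with
`s k₀ + c ≤ ŝ k₀`. A strategy `r` that is nearly optimal against `ŝ` must put mass at least some
fixed `ρ > 0` on `k₀`, since otherwise the reply `q = e_{k₀}` alone is too costly. Against `s`,
play the tilted strategy `r' = (r - δ e_{k₀}) / (1 - δ)` instead: every reply `q` to `r'` is then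
beaten, coordinatewise and by the margin `δ`, by the reply `(1 - δ) q + δ r` to `r`. Monotonicity
and the constant shift turn this into `V K (H + 1) s + δ ≤ V K (H + 1) ŝ`. -/

-- `simplex K` is definitionally `stdSimplex ℝ (Fin K)`, whose API is used throughout.

lemma simplexInt_subset_simplex (K : ℕ) : simplexInt K ⊆ simplex K :=
  fun _ hr => ⟨fun k => (hr.1 k).le, hr.2⟩

lemma uniform_mem_simplexInt (K : ℕ) [NeZero K] : (fun _ => (K : ℝ)⁻¹) ∈ simplexInt K := by
  refine ⟨fun _ => by simp [Nat.pos_of_neZero K], ?_⟩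
  simp [Finset.card_univ, NeZero.ne K]

def worstCase {K : ℕ} (f : (Fin K → ℝ) → ℝ) (s r : Fin K → ℝ) : ℝ :=
  sSup ((fun q : Fin K → ℝ => f (fun k => s k + q k / r k)) '' simplex K)

-- `V K (H + 1)` is definitionally `bellman (V K H)`.
def bellman {K : ℕ} (f : (Fin K → ℝ) → ℝ) (s : Fin K → ℝ) : ℝ :=
  sInf ((fun r => worstCase f s r) '' simplexInt K)

lemma tilt_mem_simplexInt {K : ℕ} {r : Fin K → ℝ} (hr : r ∈ simplexInt K) (k₀ : Fin K) {δ : ℝ}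
    (hδ : δ < r k₀) :
    (fun j => (r j - if j = k₀ then δ else 0) / (1 - δ)) ∈ simplexInt K := by
  have hδ1 : δ < 1 :=
    hδ.trans_le (mem_Icc_of_mem_stdSimplex (simplexInt_subset_simplex K hr) k₀).2
  refine ⟨fun j => div_pos ?_ (by linarith), ?_⟩
  · rcases eq_or_ne j k₀ with rfl | hj
    · simpa using hδ
    · simpa [hj] using hr.1 j
  · rw [← Finset.sum_div, Finset.sum_sub_distrib, hr.2, Finset.sum_ite_eq']
    simp only [Finset.mem_univ, if_true]
    exact div_self (by linarith)

lemma div_tilt_add_le {q ρ δ c : ℝ} (hq : q ∈ Set.Icc (0 : ℝ) 1) (hδ : 0 < δ)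
    (hδρ : δ ≤ ρ / 2) (hδc : 2 * δ ≤ c * ρ ^ 2) :
    q / ((ρ - δ) / (1 - δ)) + δ ≤ c + ((1 - δ) * q + δ * ρ) / ρ := by
  obtain ⟨hq0, hq1⟩ := hq
  have hρδ : 0 < ρ - δ := by linarith
  have hρ0 : 0 < ρ := by linarith
  have gain : (1 - δ) * q / (ρ - δ) - (1 - δ) * q / ρ ≤ c := by
    rw [div_sub_div _ _ hρδ.ne' hρ0.ne', div_le_iff₀ (by positivity)]
    have hc : 0 < c := pos_of_mul_pos_left (by linarith) (sq_nonneg ρ)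
    have hqδ : (1 - δ) * q ≤ 1 := mul_le_one₀ (by linarith) hq0 hq1
    nlinarith [mul_le_mul_of_nonneg_left (by linarith : ρ / 2 ≤ ρ - δ) (mul_pos hc hρ0).le]
  calc q / ((ρ - δ) / (1 - δ)) + δ = (1 - δ) * q / (ρ - δ) + δ := by
        rw [div_div_eq_mul_div, mul_comm]
    _ ≤ c + (1 - δ) * q / ρ + δ := by linarith
    _ = c + ((1 - δ) * q + δ * ρ) / ρ := by field_simp; ring

section Bellman

variable {K : ℕ} {f : (Fin K → ℝ) → ℝ}

lemma bddAbove_image_simplex (hf : Monotone f) (s : Fin K → ℝ) {r : Fin K → ℝ}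
    (hr : r ∈ simplexInt K) :
    BddAbove ((fun q : Fin K → ℝ => f (fun k => s k + q k / r k)) '' simplex K) := by
  refine ⟨f (fun k => s k + 1 / r k), Set.forall_mem_image.2 fun q hq => hf fun k => ?_⟩
  gcongr
  · exact (hr.1 k).le
  · exact (mem_Icc_of_mem_stdSimplex hq k).2

lemma le_worstCase (hf : Monotone f) (s : Fin K → ℝ) {r q : Fin K → ℝ} (hr : r ∈ simplexInt K)
    (hq : q ∈ simplex K) : f (fun k => s k + q k / r k) ≤ worstCase f s r :=
  le_csSup (bddAbove_image_simplex hf s hr) (Set.mem_image_of_mem _ hq)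

lemma worstCase_le [NeZero K] {s r : Fin K → ℝ} {b : ℝ}
    (h : ∀ q ∈ simplex K, f (fun k => s k + q k / r k) ≤ b) : worstCase f s r ≤ b :=
  csSup_le (Set.Nonempty.image _ ⟨_, single_mem_stdSimplex ℝ 0⟩)
    (Set.forall_mem_image.2 h)

lemma apply_le_worstCase [NeZero K] (hf : Monotone f) (s : Fin K → ℝ) {r : Fin K → ℝ}
    (hr : r ∈ simplexInt K) : f s ≤ worstCase f s r := by
  have hq := single_mem_stdSimplex ℝ (0 : Fin K)
  refine le_trans (hf fun k => ?_) (le_worstCase hf s hr hq)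
  exact le_add_of_nonneg_right (div_nonneg (mem_Icc_of_mem_stdSimplex hq k).1 (hr.1 k).le)

lemma add_one_div_le_worstCase (hf : Monotone f) (hcoord : ∀ x j, x j ≤ f x) (s : Fin K → ℝ)
    {r : Fin K → ℝ} (hr : r ∈ simplexInt K) (j : Fin K) : s j + 1 / r j ≤ worstCase f s r := by
  have h := (hcoord _ j).trans (le_worstCase hf s hr (single_mem_stdSimplex ℝ j))
  simpa using h

lemma bellman_le [NeZero K] (hf : Monotone f) (s : Fin K → ℝ) {r : Fin K → ℝ}
    (hr : r ∈ simplexInt K) : bellman f s ≤ worstCase f s r :=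
  csInf_le ⟨f s, Set.forall_mem_image.2 fun _ hr => apply_le_worstCase hf s hr⟩
    (Set.mem_image_of_mem _ hr)

lemma le_bellman [NeZero K] {s : Fin K → ℝ} {b : ℝ}
    (h : ∀ r ∈ simplexInt K, b ≤ worstCase f s r) : b ≤ bellman f s :=
  le_csInf (Set.Nonempty.image _ ⟨_, uniform_mem_simplexInt K⟩)
    (Set.forall_mem_image.2 h)

lemma bellman_monotone [NeZero K] (hf : Monotone f) : Monotone (bellman f) := by
  intro s t hst
  refine le_bellman fun r hr => (bellman_le hf s hr).trans (worstCase_le fun q hq => ?_)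
  exact (hf fun k => add_le_add_left (hst k) _).trans (le_worstCase hf t hr hq)

lemma le_bellman_apply [NeZero K] (hf : Monotone f) (hcoord : ∀ x j, x j ≤ f x) (s : Fin K → ℝ)
    (j : Fin K) : s j ≤ bellman f s :=
  le_bellman fun _ hr => le_trans (le_add_of_nonneg_right (one_div_pos.2 (hr.1 j)).le)
    (add_one_div_le_worstCase hf hcoord s hr j)

lemma worstCase_add_const [NeZero K] (htrans : ∀ x a, f (fun k => x k + a) = f x + a)
    (hf : Monotone f) (s : Fin K → ℝ) {r : Fin K → ℝ} (hr : r ∈ simplexInt K) (a : ℝ) :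
    worstCase f (fun k => s k + a) r = worstCase f s r + a := by
  have shift : ∀ q : Fin K → ℝ,
      f (fun k => s k + a + q k / r k) = f (fun k => s k + q k / r k) + a := fun q => by
    rw [← htrans]; simp only [add_right_comm]
  apply le_antisymm
  · exact worstCase_le fun q hq =>
      (shift q).trans_le (add_le_add_left (le_worstCase hf s hr hq) a)
  · rw [← le_sub_iff_add_le]
    refine worstCase_le fun q hq => le_sub_iff_add_le.2 ?_
    exact (shift q).symm.trans_le (le_worstCase hf _ hr hq)

lemma bellman_add_const [NeZero K] (htrans : ∀ x a, f (fun k => x k + a) = f x + a)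
    (hf : Monotone f) (s : Fin K → ℝ) (a : ℝ) :
    bellman f (fun k => s k + a) = bellman f s + a := by
  have le_shift : ∀ (s : Fin K → ℝ) a, bellman f s + a ≤ bellman f (fun k => s k + a) :=
    fun s a => le_bellman fun r hr =>
      (add_le_add_left (bellman_le hf s hr) a).trans_eq
        (worstCase_add_const htrans hf s hr a).symm
  have unshift := le_shift (fun k => s k + a) (-a)
  simp only [add_neg_cancel_right] at unshift
  exact le_antisymm (by linarith) (le_shift s a)

lemma bellman_add_le_worstCase [NeZero K] (htrans : ∀ x a, f (fun k => x k + a) = f x + a)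
    (hf : Monotone f) {s t : Fin K → ℝ} (hst : s ≤ t) {k₀ : Fin K} {c δ : ℝ}
    (hc : s k₀ + c ≤ t k₀) {r : Fin K → ℝ} (hr : r ∈ simplexInt K) (hδ : 0 < δ)
    (hδr : δ ≤ r k₀ / 2) (hδc : 2 * δ ≤ c * r k₀ ^ 2) :
    bellman f s + δ ≤ worstCase f t r := by
  have hr₀ := simplexInt_subset_simplex K hr
  have hδ1 : δ < 1 := by linarith [hr.1 k₀, (mem_Icc_of_mem_stdSimplex hr₀ k₀).2]
  set r' := fun j => (r j - if j = k₀ then δ else 0) / (1 - δ) 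
  have hr' : r' ∈ simplexInt K := tilt_mem_simplexInt hr k₀ (by linarith [hr.1 k₀])
  suffices worstCase f s r' + δ ≤ worstCase f t r from
    (add_le_add_left (bellman_le hf s hr') δ).trans this
  rw [← le_sub_iff_add_le]
  refine worstCase_le fun q hq => le_sub_iff_add_le.2 ?_
  have hq' : (1 - δ) • q + δ • r ∈ simplex K :=
    convex_stdSimplex ℝ (Fin K) hq hr₀ (by linarith) hδ.le (by ring)
  rw [← htrans]
  refine le_trans (hf fun j => ?_) (le_worstCase hf t hr hq')
  simp only [Pi.add_apply, Pi.smul_apply, smul_eq_mul, r']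
  rcases eq_or_ne j k₀ with rfl | hj
  · simp only [if_true]
    have := div_tilt_add_le (mem_Icc_of_mem_stdSimplex hq j) hδ hδr hδc
    linarith
  · simp only [hj, if_false, sub_zero]
    have hrj := hr.1 j
    have : q j / (r j / (1 - δ)) + δ = ((1 - δ) * q j + δ * r j) / r j := by
      field_simp
    linarith [hst j]

theorem bellman_lt_bellman [NeZero K] (htrans : ∀ x a, f (fun k => x k + a) = f x + a)
    (hf : Monotone f) (hcoord : ∀ x j, x j ≤ f x) {s t : Fin K → ℝ} (hst : s ≤ t) {k₀ : Fin K}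
    (hk₀ : s k₀ < t k₀) : bellman f s < bellman f t := by
  set c := t k₀ - s k₀
  set B := bellman f t + 1 - t k₀
  have hB : 1 ≤ B := by linarith [le_bellman_apply hf hcoord t k₀]
  set ρ := B⁻¹
  have hρ : 0 < ρ := inv_pos.2 (by linarith)
  set δ := min (ρ / 2) (c * ρ ^ 2 / 2)
  have hc : 0 < c := sub_pos.2 hk₀
  have hδ : 0 < δ := lt_min (by linarith) (by positivity)
  have hδ1 : δ ≤ 1 := (min_le_left _ _).trans (by linarith [inv_le_one_of_one_le₀ hB])
  suffices bellman f s + δ ≤ bellman f t by linarith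
  refine le_bellman fun r hr => ?_
  by_cases hfar : bellman f t + 1 < worstCase f t r
  · linarith [bellman_monotone hf hst]
  have hρr : ρ ≤ r k₀ := by
    have := add_one_div_le_worstCase hf hcoord t hr k₀
    rw [inv_le_comm₀ (by linarith) (hr.1 k₀), ← one_div]
    linarith
  refine bellman_add_le_worstCase htrans hf hst (add_sub_cancel (s k₀) (t k₀)).le hr hδ ?_ ?_
  · linarith [min_le_left (ρ / 2) (c * ρ ^ 2 / 2)]
  · have := min_le_right (ρ / 2) (c * ρ ^ 2 / 2)
    have : c * ρ ^ 2 ≤ c * r k₀ ^ 2 := by gcongr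
    linarith

end Bellman

section ValueFunction

variable (K : ℕ) [NeZero K]

lemma V_monotone (H : ℕ) : Monotone (V K H) := by
  induction H with
  | zero => exact fun s t hst => ciSup_mono (Finite.bddAbove_range t) hst
  | succ H ih => exact bellman_monotone ih

lemma V_add_const (H : ℕ) (s : Fin K → ℝ) (a : ℝ) :
    V K H (fun k => s k + a) = V K H s + a := by
  induction H generalizing s a with
  | zero => exact ((OrderIso.addRight a).map_ciSup (Finite.bddAbove_range s)).symm
  | succ H ih => exact bellman_add_const ih (V_monotone K H) s a

lemma apply_le_V (H : ℕ) (s : Fin K → ℝ) (j : Fin K) : s j ≤ V K H s := by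
  induction H generalizing s j with
  | zero => exact le_ciSup (Finite.bddAbove_range s) j
  | succ H ih => exact le_bellman_apply (V_monotone K H) ih s j

end ValueFunction

theorem value_coordinatewise_monotone (K : ℕ) (hK : 1 ≤ K) (sHat s : Fin K → ℝ)
    (h : ∀ k, s k ≤ sHat k) :
    (∀ H : ℕ, V K H s ≤ V K H sHat) ∧
    (sHat ≠ s → ∀ H : ℕ, 1 ≤ H → V K H s < V K H sHat) := by
  have : NeZero K := ⟨by omega⟩
  refine ⟨fun H => V_monotone K H h, fun hne H hH => ?_⟩
  obtain ⟨k₀, hk₀⟩ := Function.ne_iff.1 hne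
  obtain ⟨H, rfl⟩ := Nat.exists_eq_add_of_le' hH
  exact bellman_lt_bellman (V_add_const K H) (V_monotone K H) (apply_le_V K H) h
    ((h k₀).lt_of_ne hk₀.symm)
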